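/- arXiv:2307.07495 — 2 statements merged into one kernel-verified Lean document; each statement's English description precedes it below -/
import Mathlib

section
/- Let σ be a preference profile and let p ∈ Δ(V), q ∈ Δ(C) be arbitrary weight vectors. For any candidate a in the (p,q)-veto core of σ and any metric d aligned with σ, SC(a,d) ≤ (1 + 2·max_{v∈V} p(v) / min_{c∈C : plu(c)>0} (q(c)/plu(c))) · SC(o,d), where o is a candidate minimizing SC(·,d). Consequently, any algorithm that always outputs a candidate from the (p,q)-veto core has distortion at most 1 + 2·max_v p(v) / min_c (q(c)/plu(c)). -/
open Finset

/-- The top-ranked candidate of voter `v` under profile `σ` (rank 0 is best). -/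
noncomputable def top {V C : Type*} [Fintype C] [Nonempty C]
    (σ : V → (C ≃ Fin (Fintype.card C))) (v : V) : C :=
  (σ v).symm ⟨0, Fintype.card_pos⟩

/-- Plurality score: number of voters ranking `c` first. -/
noncomputable def plu {V C : Type*} [Fintype C] [Nonempty C]
    (σ : V → (C ≃ Fin (Fintype.card C))) (c : C) : ℕ :=
  Nat.card {v : V // top σ v = c}

/-- `a` is in the `(p,q)`-veto core of `σ`: its `(p,q)`-domination graph admits a
    fractional perfect matching. -/
def inVetoCore {V C : Type*} [Fintype V] [Fintype C]
    (σ : V → (C ≃ Fin (Fintype.card C))) (p : V → ℝ) (q : C → ℝ) (a : C) : Prop :=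
  ∃ w : V → C → ℝ,
    (∀ v c, 0 ≤ w v c) ∧
    (∀ v c, w v c ≠ 0 → σ v a ≤ σ v c) ∧
    (∀ v, ∑ c, w v c = p v) ∧
    (∀ c, ∑ v, w v c = q c)

/-- `μ(σ,q) = min_{c : plu(c) > 0} q(c)·n / plu(c)`. -/
noncomputable def mu {V C : Type*} [Fintype V] [Fintype C] [Nonempty C]
    (σ : V → (C ≃ Fin (Fintype.card C))) (q : C → ℝ) : ℝ :=
  sInf {x : ℝ | ∃ c : C, 0 < plu σ c ∧ x = q c * (Fintype.card V : ℝ) / (plu σ c : ℝ)}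

/-- Social cost of candidate `c`. -/
noncomputable def SC {V C X : Type*} [Fintype V] [MetricSpace X]
    (vloc : V → X) (cloc : C → X) (c : C) : ℝ :=
  ∑ v, dist (vloc v) (cloc c)

/-- The metric (given by locations) is aligned with the preference profile `σ`. -/
def aligned {V C X : Type*} [Fintype C] [MetricSpace X]
    (vloc : V → X) (cloc : C → X) (σ : V → (C ≃ Fin (Fintype.card C))) : Prop :=
  ∀ (v : V) (c₁ c₂ : C), σ v c₁ < σ v c₂ → dist (vloc v) (cloc c₁) ≤ dist (vloc v) (cloc c₂)

/-- The uniform voter-weight vector. -/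
noncomputable def puni (V : Type*) [Fintype V] : V → ℝ := fun _ => 1 / (Fintype.card V : ℝ)

/-- The BoostedSimVeto candidate-weight vector for confidence `δ` and prediction `chat`. -/
noncomputable def qhat {V C : Type*} [Fintype V] [Fintype C] [Nonempty C] [DecidableEq C]
    (σ : V → (C ≃ Fin (Fintype.card C))) (δ : ℝ) (chat : C) : C → ℝ :=
  fun c =>
    if c = chat then
      ((1 - δ) / (1 + δ)) * ((plu σ chat : ℝ) + 2 * δ * (Fintype.card V : ℝ) / (1 - δ))
        / (Fintype.card V : ℝ)
    else ((1 - δ) / (1 + δ)) * (plu σ c : ℝ) / (Fintype.card V : ℝ)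

/-- Alignment respects weak rank comparisons. -/
private lemma aligned_dist_le' {V C X : Type*} [Fintype C] [MetricSpace X]
    {vloc : V → X} {cloc : C → X} {σ : V → (C ≃ Fin (Fintype.card C))}
    (hal : aligned vloc cloc σ) (v : V) {c₁ c₂ : C} (h : σ v c₁ ≤ σ v c₂) :
    dist (vloc v) (cloc c₁) ≤ dist (vloc v) (cloc c₂) := by
  rcases eq_or_lt_of_le h with he | hl
  · exact le_of_eq (by rw [(σ v).injective he])
  · exact hal v c₁ c₂ hl

/-- The top candidate has minimal rank. -/
private lemma top_rank_le' {V C : Type*} [Fintype C] [Nonempty C]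
    (σ : V → (C ≃ Fin (Fintype.card C))) (u : V) (c : C) :
    σ u (top σ u) ≤ σ u c := by
  have h : σ u (top σ u) = ⟨0, Fintype.card_pos⟩ := by
    simp only [top]; exact (σ u).apply_symm_apply _
  rw [h, Fin.le_def]
  exact Nat.zero_le _

/-- Corollary 3.12 / `cor:genp-genq`: for arbitrary `p ∈ Δ(V)` and
`q ∈ Δ(C)`, any candidate in the `(p,q)`-veto core has social cost at most
`(1 + 2·max_v p(v) / min_{c : plu(c)>0} (q(c)/plu(c)))` times the optimum; hence any
`(p,q)`-algorithm has distortion at most this bound. -/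
theorem vetoCore_distortion_general_pq {V C X : Type*}
    [Fintype V] [Nonempty V] [Fintype C] [Nonempty C] [MetricSpace X]
    (σ : V → (C ≃ Fin (Fintype.card C)))
    (p : V → ℝ) (hp0 : ∀ v, 0 ≤ p v) (hp1 : ∑ v, p v = 1)
    (q : C → ℝ) (hq0 : ∀ c, 0 ≤ q c) (hq1 : ∑ c, q c = 1)
    (minRatio : ℝ)
    (hmin : minRatio = sInf {x : ℝ | ∃ c : C, 0 < plu σ c ∧ x = q c / (plu σ c : ℝ)})
    (hminpos : 0 < minRatio)
    (a : C) (ha : inVetoCore σ p q a)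
    (vloc : V → X) (cloc : C → X) (hal : aligned vloc cloc σ)
    (o : C) (ho : ∀ c, SC vloc cloc o ≤ SC vloc cloc c) :
    SC vloc cloc a ≤
      (1 + 2 * (Finset.univ.sup' Finset.univ_nonempty p) / minRatio) * SC vloc cloc o := by
  classical
  obtain ⟨w, hw0, hwa, hwrow, hwcol⟩ := ha
  set P : ℝ := Finset.univ.sup' Finset.univ_nonempty p with hPdef
  have hpP : ∀ v, p v ≤ P := fun v => Finset.le_sup' p (mem_univ v)
  have hn0 : 0 < (Fintype.card V : ℝ) := by exact_mod_cast Fintype.card_pos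
  have hnP : 1 ≤ (Fintype.card V : ℝ) * P := by
    calc (1:ℝ) = ∑ v, p v := hp1.symm
    _ ≤ ∑ _v : V, P := Finset.sum_le_sum (fun v _ => hpP v)
    _ = (Fintype.card V : ℝ) * P := by rw [Finset.sum_const, nsmul_eq_mul, Finset.card_univ]
  have hPpos : 0 < P := by nlinarith
  -- plurality facts
  have hplu_top : ∀ u : V, 0 < plu σ (top σ u) := by
    intro u
    have : Nonempty {v : V // top σ v = top σ u} := ⟨⟨u, rfl⟩⟩
    exact Nat.card_pos
  have hmr : ∀ c : C, 0 < plu σ c → minRatio ≤ q c / (plu σ c : ℝ) := by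
    intro c hc
    rw [hmin]
    refine csInf_le ⟨0, ?_⟩ ⟨c, hc, rfl⟩
    rintro x ⟨c', hc', rfl⟩
    exact div_nonneg (hq0 c') (Nat.cast_nonneg _)
  have hmq : ∀ c : C, minRatio * (plu σ c : ℝ) ≤ q c := by
    intro c
    rcases Nat.eq_zero_or_pos (plu σ c) with h | h
    · simp [h, hq0 c]
    · have hplupos : (0:ℝ) < (plu σ c : ℝ) := by exact_mod_cast h
      have h2 := hmr c h
      rw [le_div_iff₀ hplupos] at h2
      linarith
  have hqt : ∀ u : V, 0 < q (top σ u) := by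
    intro u
    have h1 : (0:ℝ) < minRatio * (plu σ (top σ u) : ℝ) :=
      mul_pos hminpos (by exact_mod_cast hplu_top u)
    exact h1.trans_le (hmq _)
  -- the scaled voter-voter matching
  set mt : V → V → ℝ := fun v u => w v (top σ u) * (minRatio / q (top σ u)) with hmtdef
  have hm0 : ∀ v u, 0 ≤ mt v u := fun v u =>
    mul_nonneg (hw0 v _) (div_nonneg hminpos.le (hq0 _))
  have hcol : ∀ u : V, ∑ v, mt v u = minRatio := by
    intro u
    rw [show (∑ v, mt v u) = (∑ v, w v (top σ u)) * (minRatio / q (top σ u)) from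
      (Finset.sum_mul _ _ _).symm, hwcol (top σ u)]
    field_simp
    exact div_self (hqt u).ne'
  -- row sums are at most p v
  have hplufilter : ∀ c : C, plu σ c = (univ.filter (fun v => top σ v = c)).card := by
    intro c
    rw [plu, Nat.card_eq_fintype_card, Fintype.card_subtype]
  have hfiber : ∀ g : C → ℝ, ∑ u : V, g (top σ u) = ∑ c : C, (plu σ c : ℝ) * g c := by
    intro g
    rw [← Finset.sum_fiberwise (univ : Finset V) (fun u => top σ u) (fun u => g (top σ u))]
    refine Finset.sum_congr rfl (fun c _ => ?_)
    rw [Finset.sum_congr rfl (fun u hu => by rw [(Finset.mem_filter.mp hu).2]),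
      Finset.sum_const, hplufilter c, nsmul_eq_mul]
  have hrowle : ∀ v, (∑ u, mt v u) ≤ p v := by
    intro v
    have h1 : (∑ u, mt v u) = ∑ c, (plu σ c : ℝ) * (w v c * (minRatio / q c)) :=
      hfiber (fun c => w v c * (minRatio / q c))
    rw [h1, ← hwrow v]
    apply Finset.sum_le_sum
    intro c _
    rcases eq_or_lt_of_le (hq0 c) with hq | hq
    · rw [← hq]
      simp [hw0 v c]
    · have h2 : (plu σ c : ℝ) * (minRatio / q c) ≤ 1 := by
        rw [← mul_div_assoc, div_le_one hq]
        calc (plu σ c : ℝ) * minRatio = minRatio * (plu σ c : ℝ) := by ring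
        _ ≤ q c := hmq c
      calc (plu σ c : ℝ) * (w v c * (minRatio / q c))
          = w v c * ((plu σ c : ℝ) * (minRatio / q c)) := by ring
      _ ≤ w v c * 1 := mul_le_mul_of_nonneg_left h2 (hw0 v c)
      _ = w v c := mul_one _
  have hrowP : ∀ v, (∑ u, mt v u) ≤ P := fun v => (hrowle v).trans (hpP v)
  -- distances
  set D : V → ℝ := fun z => dist (vloc z) (cloc o) with hDdef
  set dva : V → ℝ := fun z => dist (vloc z) (cloc a) with hdvadef
  set doa : ℝ := dist (cloc o) (cloc a) with hdoadef
  have hD0 : ∀ z, 0 ≤ D z := fun z => dist_nonneg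
  have hdva0 : ∀ z, 0 ≤ dva z := fun z => dist_nonneg
  have hdoa0 : 0 ≤ doa := dist_nonneg
  have hSCo : SC vloc cloc o = ∑ z, D z := rfl
  have hSCa : SC vloc cloc a = ∑ z, dva z := rfl
  have hSCo0 : 0 ≤ SC vloc cloc o := by
    rw [hSCo]; exact Finset.sum_nonneg (fun z _ => hD0 z)
  -- edge bound
  have hedge : ∀ v u : V, mt v u ≠ 0 → dva v ≤ D v + 2 * D u := by
    intro v u hmt
    have hwne : w v (top σ u) ≠ 0 := left_ne_zero_of_mul hmt
    have h1 : dva v ≤ dist (vloc v) (cloc (top σ u)) :=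
      aligned_dist_le' hal v (hwa v _ hwne)
    have h2 : dist (vloc v) (cloc (top σ u)) ≤
        D v + dist (cloc o) (cloc (top σ u)) := dist_triangle _ _ _
    have h3 : dist (cloc o) (cloc (top σ u)) ≤
        dist (cloc o) (vloc u) + dist (vloc u) (cloc (top σ u)) := dist_triangle _ _ _
    have h4 : dist (vloc u) (cloc (top σ u)) ≤ D u :=
      aligned_dist_le' hal u (top_rank_le' σ u o)
    have h5 : dist (cloc o) (vloc u) = D u := dist_comm _ _
    simp only [hDdef] at *
    linarith
  have hdoaedge : ∀ v u : V, mt v u ≠ 0 → doa ≤ 2 * D v + 2 * D u := by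
    intro v u hmt
    have h1 : doa ≤ dist (cloc o) (vloc v) + dva v := dist_triangle _ _ _
    have h2 : dist (cloc o) (vloc v) = D v := dist_comm _ _
    have h3 := hedge v u hmt
    linarith
  -- total mass identities
  have hB : ∑ z, (∑ u, mt z u) = (Fintype.card V : ℝ) * minRatio := by
    rw [Finset.sum_comm]
    simp only [hcol]
    rw [Finset.sum_const, nsmul_eq_mul, Finset.card_univ]
  have hsum1 : ∑ z, ∑ u, mt z u * D u = minRatio * (SC vloc cloc o) := by
    rw [Finset.sum_comm, hSCo, Finset.mul_sum]
    refine Finset.sum_congr rfl (fun u _ => ?_)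
    rw [← Finset.sum_mul, hcol u]
  -- bound on n * minRatio * doa
  have Hdoa : (Fintype.card V : ℝ) * minRatio * doa ≤
      2 * (P + minRatio) * (SC vloc cloc o) := by
    have h5 : ∑ v, ∑ u, mt v u * doa ≤ ∑ v, ∑ u, mt v u * (2 * D v + 2 * D u) := by
      refine Finset.sum_le_sum (fun v _ => Finset.sum_le_sum (fun u _ => ?_))
      rcases eq_or_ne (mt v u) 0 with h | h
      · rw [h]; simp
      · exact mul_le_mul_of_nonneg_left (hdoaedge v u h) (hm0 v u)
    have hl : ∑ v, ∑ u, mt v u * doa = (Fintype.card V : ℝ) * minRatio * doa := by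
      rw [← hB, Finset.sum_mul]
      exact Finset.sum_congr rfl (fun v _ => (Finset.sum_mul _ _ _).symm)
    have hr1 : ∑ v, ∑ u, mt v u * (2 * D v + 2 * D u)
        = ∑ v, ((∑ u, mt v u) * (2 * D v)) + ∑ u, (∑ v, mt v u) * (2 * D u) := by
      have e1 : ∀ v : V, ∑ u, mt v u * (2 * D v + 2 * D u)
          = (∑ u, mt v u) * (2 * D v) + ∑ u, mt v u * (2 * D u) := by
        intro v
        rw [Finset.sum_mul, ← Finset.sum_add_distrib]
        exact Finset.sum_congr rfl (fun u _ => by ring)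
      rw [Finset.sum_congr rfl (fun v _ => e1 v), Finset.sum_add_distrib]
      congr 1
      rw [Finset.sum_comm]
      exact Finset.sum_congr rfl (fun u _ => (Finset.sum_mul _ _ _).symm)
    have hr2 : ∑ v, ((∑ u, mt v u) * (2 * D v)) ≤ 2 * P * (SC vloc cloc o) := by
      rw [hSCo, Finset.mul_sum]
      refine Finset.sum_le_sum (fun v _ => ?_)
      have := hrowP v
      have := hm0
      nlinarith [hD0 v, hrowP v, Finset.sum_nonneg (fun u (_ : u ∈ univ) => hm0 v u)]
    have hr3 : ∑ u, (∑ v, mt v u) * (2 * D u) = 2 * minRatio * (SC vloc cloc o) := by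
      rw [hSCo, Finset.mul_sum]
      refine Finset.sum_congr rfl (fun u _ => ?_)
      rw [hcol u]; ring
    rw [hl, hr1, hr3] at h5
    linarith [hr2]
  -- per-voter bound, multiplied through by P
  have hperz : ∀ z : V, P * dva z ≤
      P * D z + 2 * (∑ u, mt z u * D u) + (P - ∑ u, mt z u) * doa := by
    intro z
    have e1 : (∑ u, mt z u) * dva z ≤ (∑ u, mt z u) * D z + 2 * ∑ u, mt z u * D u := by
      have h6 : ∑ u, mt z u * dva z ≤ ∑ u, mt z u * (D z + 2 * D u) := by
        refine Finset.sum_le_sum (fun u _ => ?_)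
        rcases eq_or_ne (mt z u) 0 with h | h
        · rw [h]; simp
        · exact mul_le_mul_of_nonneg_left (hedge z u h) (hm0 z u)
      have h7 : ∑ u, mt z u * (D z + 2 * D u)
          = (∑ u, mt z u) * D z + 2 * ∑ u, mt z u * D u := by
        rw [Finset.sum_mul, Finset.mul_sum, ← Finset.sum_add_distrib]
        exact Finset.sum_congr rfl (fun u _ => by ring)
      rw [← Finset.sum_mul] at h6
      linarith [h6, h7.symm.le, h7.le]
    have e2 : dva z ≤ D z + doa := by
      have := dist_triangle (vloc z) (cloc o) (cloc a)
      simp only [hdvadef, hDdef, hdoadef]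
      exact this
    have e3 : 0 ≤ P - ∑ u, mt z u := by linarith [hrowP z]
    have e4 : (P - ∑ u, mt z u) * dva z ≤ (P - ∑ u, mt z u) * (D z + doa) :=
      mul_le_mul_of_nonneg_left e2 e3
    nlinarith [e1, e4]
  -- sum the per-voter bound
  have Hmain : P * (SC vloc cloc a) ≤ P * (SC vloc cloc o)
      + 2 * minRatio * (SC vloc cloc o)
      + ((Fintype.card V : ℝ) * P - (Fintype.card V : ℝ) * minRatio) * doa := by
    have h8 : P * (SC vloc cloc a) = ∑ z, P * dva z := by
      rw [hSCa, Finset.mul_sum]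
    have h9 : ∑ z, P * dva z ≤
        ∑ z, (P * D z + 2 * (∑ u, mt z u * D u) + (P - ∑ u, mt z u) * doa) :=
      Finset.sum_le_sum (fun z _ => hperz z)
    have h10 : ∑ z, (P * D z + 2 * (∑ u, mt z u * D u) + (P - ∑ u, mt z u) * doa)
        = P * (SC vloc cloc o) + 2 * minRatio * (SC vloc cloc o)
          + ((Fintype.card V : ℝ) * P - (Fintype.card V : ℝ) * minRatio) * doa := by
      rw [Finset.sum_add_distrib, Finset.sum_add_distrib]
      congr 1
      · congr 1
        · rw [hSCo, Finset.mul_sum]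
        · rw [← Finset.mul_sum, hsum1]; ring
      · rw [← Finset.sum_mul, Finset.sum_sub_distrib, Finset.sum_const, nsmul_eq_mul,
          Finset.card_univ, hB]
    rw [h8]
    rw [h10] at h9
    exact h9
  -- final algebra
  have hPm : minRatio ≤ P := by
    have h11 : minRatio * (Fintype.card V : ℝ) ≤ 1 := by
      have h12 : minRatio * (Fintype.card V : ℝ) = ∑ c : C, minRatio * (plu σ c : ℝ) := by
        rw [← Finset.mul_sum]
        congr 1
        have h13 : ∑ c : C, (plu σ c : ℕ) = Fintype.card V := by
          have := Finset.card_eq_sum_card_fiberwise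
            (f := fun v : V => top σ v) (s := univ) (t := univ)
            (fun x _ => mem_univ _)
          rw [Finset.card_univ] at this
          rw [this]
          exact Finset.sum_congr rfl (fun c _ => by rw [hplufilter c])
        rw [← h13]
        push_cast
        rfl
      rw [h12, ← hq1]
      exact Finset.sum_le_sum (fun c _ => hmq c)
    nlinarith
  have H1 : minRatio * (P * (SC vloc cloc a)) ≤
      minRatio * (P * (SC vloc cloc o)) + 2 * minRatio * minRatio * (SC vloc cloc o)
      + (P - minRatio) * ((Fintype.card V : ℝ) * minRatio * doa) := by
    nlinarith [mul_le_mul_of_nonneg_left Hmain hminpos.le]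
  have H3 : (P - minRatio) * ((Fintype.card V : ℝ) * minRatio * doa)
      ≤ (P - minRatio) * (2 * (P + minRatio) * (SC vloc cloc o)) :=
    mul_le_mul_of_nonneg_left Hdoa (by linarith)
  have H4 : minRatio * (P * (SC vloc cloc a)) ≤ P * ((minRatio + 2 * P) * (SC vloc cloc o)) := by
    nlinarith [H1, H3]
  have hgoal : (1 + 2 * P / minRatio) = (minRatio + 2 * P) / minRatio := by
    field_simp
  rw [hgoal, div_mul_eq_mul_div, le_div_iff₀ hminpos]
  have := (mul_le_mul_iff_right₀ hPpos).mp (by linarith [H4] : P * (minRatio * (SC vloc cloc a)) ≤ P * ((minRatio + 2 * P) * (SC vloc cloc o)))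
  linarith [this]
end

section
/- Fix δ ∈ [0,1). Let ALG be any deterministic learning-augmented algorithm that takes as input a preference profile σ and a prediction of the full metric (all pairwise voter–candidate distances) and outputs a candidate. If ALG is ((3−δ)/(1+δ))-consistent — i.e., for every instance (V,C,d) inducing a preference profile σ, when ALG is given σ together with the accurate prediction d, its output c satisfies SC(c,d) ≤ ((3−δ)/(1+δ))·SC(o(d),d) — then for every β < (3+δ)/(1−δ), ALG is not β-robust: there exist an instance (V,C,d) with d aligned with σ and a (possibly inaccurate) predicted metric d̂ such that SC(ALG(σ,d̂), d) > β·SC(o(d), d). This holds even for instances on the real line with only two candidates. -/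
open Finset

lemma sum_split' (m k : ℕ) (A B : ℝ) :
    ∑ v : Fin (m + k), (if (v : ℕ) < m then A else B) = m * A + k * B := by
  rw [Fin.sum_univ_add]
  have h1 : ∀ i : Fin m, (if ((Fin.castAdd k i : Fin (m+k)) : ℕ) < m then A else B) = A :=
    fun i => if_pos (by simp)
  have h2 : ∀ i : Fin k, (if ((Fin.natAdd m i : Fin (m+k)) : ℕ) < m then A else B) = B :=
    fun i => if_neg (by simp)
  rw [Finset.sum_congr rfl (fun i _ => h1 i), Finset.sum_congr rfl (fun i _ => h2 i)]
  simp [mul_comm]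

/-- Theorem 4.1 / `thm:mainlowerbound`: for any `δ ∈ [0,1)`, a
deterministic algorithm augmented with a prediction of the full metric (all pairwise
distances on `V ⊕ C`) that is `((3−δ)/(1+δ))`-consistent cannot be `β`-robust for any
`β < (3+δ)/(1−δ)` — even on instances on the real line with just two candidates.
Here `ALG n σ dpred` is the candidate output on a profile `σ` over `n` voters and two
candidates, with predicted metric `dpred`; consistency is required when the prediction
equals the true metric induced by the locations. -/
theorem consistency_robustness_tradeoff_lower_bound (δ : ℝ) (hδ0 : 0 ≤ δ) (hδ1 : δ < 1)
    (ALG : (n : ℕ) → (Fin n → (Fin 2 ≃ Fin (Fintype.card (Fin 2)))) →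
      ((Fin n ⊕ Fin 2) → (Fin n ⊕ Fin 2) → ℝ) → Fin 2)
    (hconsistent : ∀ (n : ℕ) (vloc : Fin n → ℝ) (cloc : Fin 2 → ℝ)
      (σ : Fin n → (Fin 2 ≃ Fin (Fintype.card (Fin 2)))), aligned vloc cloc σ →
      ∀ o : Fin 2, (∀ c, SC vloc cloc o ≤ SC vloc cloc c) →
        SC vloc cloc
            (ALG n σ (fun x y => dist (Sum.elim vloc cloc x) (Sum.elim vloc cloc y)))
          ≤ ((3 - δ) / (1 + δ)) * SC vloc cloc o) :
    ∀ β : ℝ, β < (3 + δ) / (1 - δ) →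
      ∃ (n : ℕ) (vloc : Fin n → ℝ) (cloc : Fin 2 → ℝ)
        (σ : Fin n → (Fin 2 ≃ Fin (Fintype.card (Fin 2))))
        (dpred : (Fin n ⊕ Fin 2) → (Fin n ⊕ Fin 2) → ℝ) (o : Fin 2),
        aligned vloc cloc σ ∧ (∀ c, SC vloc cloc o ≤ SC vloc cloc c) ∧
        SC vloc cloc (ALG n σ dpred) > β * SC vloc cloc o := by
  intro β hβ
  have h1δ : (0:ℝ) < 1 - δ := by linarith
  have h1δ' : (0:ℝ) < 1 + δ := by linarith
  have hlt : max ((β - 1) / 2) 0 < (1 + δ) / (1 - δ) := by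
    apply max_lt
    · rw [div_lt_div_iff₀ (by norm_num) h1δ]
      nlinarith [(lt_div_iff₀ h1δ).mp hβ]
    · positivity
  obtain ⟨q, hq1, hq2⟩ := exists_rat_btwn hlt
  have hq0 : 0 < q := by
    have : (0:ℝ) < (q:ℝ) := lt_of_le_of_lt (le_max_right _ _) hq1
    exact_mod_cast this
  set k : ℕ := q.num.toNat with hk
  set m : ℕ := q.den with hm
  have hknum : (k : ℤ) = q.num := Int.toNat_of_nonneg (by positivity)
  have hmpos : 0 < m := q.pos
  have hkpos : 0 < k := by
    have : 0 < q.num := Rat.num_pos.mpr hq0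
    omega
  have hmR : (0:ℝ) < (m:ℝ) := by exact_mod_cast hmpos
  have hkR : (0:ℝ) < (k:ℝ) := by exact_mod_cast hkpos
  have hqval : (q : ℝ) = (k : ℝ) / (m : ℝ) := by
    rw [Rat.cast_def]
    congr 1
    exact_mod_cast hknum.symm
  have key1 : (k:ℝ) * (1 - δ) < (m:ℝ) * (1 + δ) := by
    have := hq2
    rw [hqval, div_lt_div_iff₀ hmR h1δ] at this
    linarith
  have key2 : β * (m:ℝ) < (m:ℝ) + 2 * (k:ℝ) := by
    have := lt_of_le_of_lt (le_max_left _ _) hq1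
    rw [hqval, div_lt_div_iff₀ (by norm_num) hmR] at this
    linarith
  set n := m + k with hn
  set cloc : Fin 2 → ℝ := fun c => (c : ℕ) with hcloc
  set vloc1 : Fin n → ℝ := fun v => if (v:ℕ) < m then 0 else 1/2 with hvloc1
  set vloc2 : Fin n → ℝ := fun v => if (v:ℕ) < m then 1/2 else 1 with hvloc2
  set σ : Fin n → (Fin 2 ≃ Fin (Fintype.card (Fin 2))) :=
    fun v => if (v:ℕ) < m then Equiv.refl (Fin 2) else Equiv.swap 0 1 with hσ
  have hSC : ∀ (vl : Fin n → ℝ) (c : Fin 2) (A B : ℝ),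
      (∀ v : Fin n, dist (vl v) (cloc c) = if (v:ℕ) < m then A else B) →
      SC vl cloc c = m * A + k * B := by
    intro vl c A B h
    rw [SC, Finset.sum_congr rfl (fun v _ => h v)]
    exact sum_split' m k A B
  have d00 : SC vloc1 cloc 0 = m * 0 + k * (1/2) := by
    apply hSC; intro v
    by_cases hv : (v:ℕ) < m <;> simp [hvloc1, hcloc, hv, Real.dist_eq] <;> norm_num
  have d01 : SC vloc1 cloc 1 = m * 1 + k * (1/2) := by
    apply hSC; intro v
    by_cases hv : (v:ℕ) < m <;> simp [hvloc1, hcloc, hv, Real.dist_eq] <;> norm_num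
  have d20 : SC vloc2 cloc 0 = m * (1/2) + k * 1 := by
    apply hSC; intro v
    by_cases hv : (v:ℕ) < m <;> simp [hvloc2, hcloc, hv, Real.dist_eq] <;> norm_num
  have d21 : SC vloc2 cloc 1 = m * (1/2) + k * 0 := by
    apply hSC; intro v
    by_cases hv : (v:ℕ) < m <;> simp [hvloc2, hcloc, hv, Real.dist_eq] <;> norm_num
  have hal : ∀ vl : Fin n → ℝ, (∀ v : Fin n, (v:ℕ) < m →
        dist (vl v) (cloc 0) ≤ dist (vl v) (cloc 1)) →
      (∀ v : Fin n, ¬ (v:ℕ) < m →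
        dist (vl v) (cloc 1) ≤ dist (vl v) (cloc 0)) → aligned vl cloc σ := by
    intro vl h0 h1 v c₁ c₂ h
    by_cases hv : (v:ℕ) < m
    · have hσv : σ v = Equiv.refl (Fin 2) := if_pos hv
      rw [hσv] at h
      fin_cases c₁ <;> fin_cases c₂ <;>
        first
          | exact absurd h (by decide)
          | exact h0 v hv
    · have hσv : σ v = Equiv.swap 0 1 := if_neg hv
      rw [hσv] at h
      fin_cases c₁ <;> fin_cases c₂ <;>
        first
          | exact absurd h (by decide)
          | exact h1 v hv
  have hal1 : aligned vloc1 cloc σ := by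
    apply hal <;> intro v hv <;>
      simp only [hvloc1, hcloc, hv, if_true, if_false, ite_true, ite_false, Real.dist_eq] <;>
      norm_num
  have hal2 : aligned vloc2 cloc σ := by
    apply hal <;> intro v hv <;>
      simp only [hvloc2, hcloc, hv, if_true, if_false, ite_true, ite_false, Real.dist_eq] <;>
      norm_num
  set dpred : (Fin n ⊕ Fin 2) → (Fin n ⊕ Fin 2) → ℝ :=
    fun x y => dist (Sum.elim vloc1 cloc x) (Sum.elim vloc1 cloc y) with hdpred
  have hc2 : ∀ c : Fin 2, c = 0 ∨ c = 1 := by decide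
  have hopt1 : ∀ c, SC vloc1 cloc 0 ≤ SC vloc1 cloc c := by
    intro c; rcases hc2 c with rfl | rfl
    · exact le_refl _
    · rw [d00, d01]; nlinarith
  have hout : ALG n σ dpred = 0 := by
    by_contra h
    have hone : ALG n σ dpred = 1 := by omega
    have := hconsistent n vloc1 cloc σ hal1 0 hopt1
    rw [← hdpred, hone, d01, d00] at this
    rw [div_mul_eq_mul_div, le_div_iff₀ h1δ'] at this
    nlinarith
  refine ⟨n, vloc2, cloc, σ, dpred, 1, hal2, ?_, ?_⟩
  · intro c; rcases hc2 c with rfl | rfl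
    · rw [d20, d21]; nlinarith
    · exact le_refl _
  · rw [hout, d20, d21]; nlinarith
end
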